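/- arXiv:0910.5526 — 6 statements merged into one kernel-verified Lean document; each statement's English description precedes it below -/
import Mathlib

section
/- Let Ω = (-a,a) and let h ∈ H¹(Ω) be a nonnegative function with ∫_Ω h(x) dx = M > 0. Then ∫_Ω h(x)² dx ≤ 6^{2/3} M^{4/3} (∫_Ω h_x(x)² dx)^{1/3} + M²/|Ω|. -/
/-!
Let `M = ∫ h` and `D = ∫ h_x²`. The derivative of `h^{3/2}` is `(3/2) √h h_x`, whose `L¹` norm
is at most `(3/2) √(M D)` by Cauchy–Schwarz. Since `h` is at most its mean `M / |Ω|` somewhere,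
the fundamental theorem of calculus gives `h^{3/2} ≤ (M / |Ω|)^{3/2} + (3/2) √(M D)` everywhere,
hence `sup h ≤ M / |Ω| + (3/2)^{2/3} (M D)^{1/3}` by subadditivity of `t ↦ t^{2/3}`. Finally
`∫ h² ≤ (sup h) ∫ h`.
-/

open MeasureTheory Set
open scoped Interval

theorem integral_abs_mul_le_sqrt_mul_sqrt {α : Type*} [MeasurableSpace α] {μ : Measure α}
    {f g : α → ℝ} (hf : MemLp f 2 μ) (hg : MemLp g 2 μ) :
    ∫ x, |f x * g x| ∂μ ≤ √(∫ x, f x ^ 2 ∂μ) * √(∫ x, g x ^ 2 ∂μ) := by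
  have := integral_mul_norm_le_Lp_mul_Lq Real.HolderConjugate.two_two
    (by simpa using hf) (by simpa using hg)
  simp only [Real.norm_eq_abs, ← abs_mul, Real.rpow_two, sq_abs] at this
  rwa [Real.sqrt_eq_rpow, Real.sqrt_eq_rpow]

theorem le_add_setIntegral_abs_of_hasDerivAt {f g : ℝ → ℝ} {a b x y : ℝ}
    (hf : ∀ t ∈ Icc a b, HasDerivAt f (g t) t) (hg : IntegrableOn g (Icc a b))
    (hx : x ∈ Icc a b) (hy : y ∈ Icc a b) :
    f x ≤ f y + ∫ t in Icc a b, |g t| := by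
  have hsub : uIcc y x ⊆ Icc a b := uIcc_subset_Icc hy hx
  have hftc : ∫ t in y..x, g t = f x - f y :=
    intervalIntegral.integral_eq_sub_of_hasDerivAt (fun t ht => hf t (hsub ht))
      (hg.mono_set hsub).intervalIntegrable
  have hnorm : ‖∫ t in y..x, g t‖ ≤ ∫ t in Ι y x, ‖g t‖ :=
    intervalIntegral.norm_integral_le_integral_norm_uIoc
  have hmono : ∫ t in Ι y x, ‖g t‖ ≤ ∫ t in Icc a b, |g t| :=
    setIntegral_mono_set hg.norm (ae_of_all _ fun _ => norm_nonneg _)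
      (uIoc_subset_uIcc.trans hsub).eventuallyLE
  rw [hftc, Real.norm_eq_abs] at hnorm
  linarith [le_abs_self (f x - f y)]

theorem integral_sq_le_mul_integral {α : Type*} [MeasurableSpace α] {μ : Measure α}
    {f : α → ℝ} {C : ℝ} (hf : Integrable f μ) (hf0 : 0 ≤ᵐ[μ] f)
    (hfC : ∀ᵐ x ∂μ, f x ≤ C) :
    ∫ x, f x ^ 2 ∂μ ≤ C * ∫ x, f x ∂μ := by
  rw [← integral_const_mul]
  refine integral_mono_of_nonneg (ae_of_all _ fun x => sq_nonneg (f x)) (hf.const_mul C) ?_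
  filter_upwards [hf0, hfC] with x h0 hC
  rw [sq]
  exact mul_le_mul_of_nonneg_right hC h0

theorem le_add_rpow_two_thirds_of_rpow_three_halves_le {u A B : ℝ} (hu : 0 ≤ u) (hA : 0 ≤ A)
    (hB : 0 ≤ B) (h : u ^ (3 / 2 : ℝ) ≤ A ^ (3 / 2 : ℝ) + B) :
    u ≤ A + B ^ (2 / 3 : ℝ) := by
  have hinv : ∀ {v : ℝ}, 0 ≤ v → (v ^ (3 / 2 : ℝ)) ^ (2 / 3 : ℝ) = v := fun hv => by
    rw [← Real.rpow_mul hv]; norm_num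
  calc u = (u ^ (3 / 2 : ℝ)) ^ (2 / 3 : ℝ) := (hinv hu).symm
    _ ≤ (A ^ (3 / 2 : ℝ) + B) ^ (2 / 3 : ℝ) := by gcongr
    _ ≤ (A ^ (3 / 2 : ℝ)) ^ (2 / 3 : ℝ) + B ^ (2 / 3 : ℝ) :=
        Real.rpow_add_le_add_rpow (by positivity) hB (by norm_num) (by norm_num)
    _ = A + B ^ (2 / 3 : ℝ) := by rw [hinv hA]

theorem exists_mem_Icc_le_setIntegral_div {f : ℝ → ℝ} {a b : ℝ} (hab : a < b)
    (hf : IntegrableOn f (Icc a b)) :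
    ∃ x ∈ Icc a b, f x ≤ (∫ t in Icc a b, f t) / (b - a) := by
  obtain ⟨x, hx, hle⟩ := exists_le_setAverage (by simp [hab]) (by simp) hf
  refine ⟨x, hx, hle.trans_eq ?_⟩
  rw [setAverage_eq, Real.volume_real_Icc_of_le hab.le, smul_eq_mul, inv_mul_eq_div]

theorem le_setIntegral_div_add_of_integrableOn_deriv_sq {h : ℝ → ℝ} {a b : ℝ} (hab : a < b)
    (hdiff : ∀ x ∈ Icc a b, DifferentiableAt ℝ h x)
    (hL2' : IntegrableOn (fun x => deriv h x ^ 2) (Icc a b))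
    (hnn : ∀ x ∈ Icc a b, 0 ≤ h x) {x : ℝ} (hx : x ∈ Icc a b) :
    h x ≤ (∫ t in Icc a b, h t) / (b - a) + (3 / 2 : ℝ) ^ (2 / 3 : ℝ) *
      ((∫ t in Icc a b, h t) * ∫ t in Icc a b, deriv h t ^ 2) ^ (1 / 3 : ℝ) := by
  set M := ∫ t in Icc a b, h t
  set D := ∫ t in Icc a b, deriv h t ^ 2
  have hcont : ContinuousOn h (Icc a b) :=
    fun x hx => (hdiff x hx).continuousAt.continuousWithinAt
  have hint : IntegrableOn h (Icc a b) := hcont.integrableOn_compact isCompact_Icc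
  have hM : 0 ≤ M := setIntegral_nonneg measurableSet_Icc hnn
  have hD : 0 ≤ D := setIntegral_nonneg measurableSet_Icc fun t _ => sq_nonneg _
  have hsqrt : MemLp (fun t => √(h t)) 2 (volume.restrict (Icc a b)) := by
    refine (memLp_two_iff_integrable_sq ((Real.continuous_sqrt.comp_continuousOn hcont)
      |>.aestronglyMeasurable measurableSet_Icc)).2 ?_
    exact hint.congr_fun (fun t ht => (Real.sq_sqrt (hnn t ht)).symm) measurableSet_Icc
  have hderiv : MemLp (deriv h) 2 (volume.restrict (Icc a b)) :=
    (memLp_two_iff_integrable_sq (measurable_deriv h).aestronglyMeasurable).2 hL2'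
  have hF : ∀ t ∈ Icc a b, HasDerivAt (fun s => h s ^ (3 / 2 : ℝ))
      (3 / 2 * (√(h t) * deriv h t)) t := fun t ht => by
    convert (hdiff t ht).hasDerivAt.rpow_const (p := 3 / 2) (Or.inr (by norm_num)) using 1
    rw [Real.sqrt_eq_rpow]; norm_num; ring
  have hvar : ∫ t in Icc a b, |3 / 2 * (√(h t) * deriv h t)| ≤ 3 / 2 * (√M * √D) := by
    have hsq : ∫ t in Icc a b, √(h t) ^ 2 = M :=
      setIntegral_congr_fun measurableSet_Icc fun t ht => Real.sq_sqrt (hnn t ht)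
    simp only [abs_mul, abs_of_pos (by norm_num : (0 : ℝ) < 3 / 2)]
    rw [integral_const_mul, ← hsq]
    gcongr
    simp only [← abs_mul]
    exact integral_abs_mul_le_sqrt_mul_sqrt hsqrt hderiv
  obtain ⟨x₀, hx₀, hx₀M⟩ := exists_mem_Icc_le_setIntegral_div hab hint
  have hpow : h x ^ (3 / 2 : ℝ) ≤ (M / (b - a)) ^ (3 / 2 : ℝ) + 3 / 2 * (√M * √D) := by
    calc h x ^ (3 / 2 : ℝ)
        ≤ h x₀ ^ (3 / 2 : ℝ) + ∫ t in Icc a b, |3 / 2 * (√(h t) * deriv h t)| :=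
          le_add_setIntegral_abs_of_hasDerivAt hF
            ((hsqrt.integrable_mul hderiv).const_mul _) hx hx₀
      _ ≤ (M / (b - a)) ^ (3 / 2 : ℝ) + 3 / 2 * (√M * √D) := by
          gcongr
          exact hnn x₀ hx₀
  have hcoef : (3 / 2 * (√M * √D)) ^ (2 / 3 : ℝ)
      = (3 / 2 : ℝ) ^ (2 / 3 : ℝ) * (M * D) ^ (1 / 3 : ℝ) := by
    rw [← Real.sqrt_mul hM, Real.mul_rpow (by norm_num) (by positivity), Real.sqrt_eq_rpow,
      ← Real.rpow_mul (by positivity)]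
    norm_num
  rw [← hcoef]
  exact le_add_rpow_two_thirds_of_rpow_three_halves_le (hnn x hx)
    (div_nonneg hM (sub_nonneg.2 hab.le)) (by positivity) hpow

theorem stmt0_general (a M : ℝ) (ha : 0 < a) (h : ℝ → ℝ)
    (hdiff : ∀ x ∈ Set.Icc (-a) a, DifferentiableAt ℝ h x)
    (hL2' : IntegrableOn (fun x => (deriv h x) ^ 2) (Set.Icc (-a) a))
    (hnn : ∀ x ∈ Set.Icc (-a) a, 0 ≤ h x)
    (hM : (∫ x in (-a)..a, h x) = M) :
    (∫ x in (-a)..a, (h x) ^ 2)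
      ≤ (6 : ℝ) ^ ((2 : ℝ)/3) * M ^ ((4 : ℝ)/3) *
          (∫ x in (-a)..a, (deriv h x) ^ 2) ^ ((1 : ℝ)/3)
        + M ^ 2 / (2 * a) := by
  have hab : -a < a := by linarith
  have hIcc (f : ℝ → ℝ) : ∫ x in (-a)..a, f x = ∫ x in Icc (-a) a, f x := by
    rw [intervalIntegral.integral_of_le hab.le, integral_Icc_eq_integral_Ioc]
  rw [hIcc] at hM
  rw [hIcc, hIcc]
  set D := ∫ x in Icc (-a) a, deriv h x ^ 2
  have hM0 : 0 ≤ M := hM ▸ setIntegral_nonneg measurableSet_Icc hnn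
  have hD0 : 0 ≤ D := setIntegral_nonneg measurableSet_Icc fun t _ => sq_nonneg _
  set S := M / (2 * a) + (3 / 2 : ℝ) ^ (2 / 3 : ℝ) * (M * D) ^ (1 / 3 : ℝ)
  have hsup : ∀ x ∈ Icc (-a) a, h x ≤ S := by
    intro x hx
    have := le_setIntegral_div_add_of_integrableOn_deriv_sq hab hdiff hL2' hnn hx
    rwa [hM, sub_neg_eq_add, ← two_mul] at this
  have hint : IntegrableOn h (Icc (-a) a) := ContinuousOn.integrableOn_compact isCompact_Icc
    fun x hx => (hdiff x hx).continuousAt.continuousWithinAt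
  have hM43 : (M * D) ^ (1 / 3 : ℝ) * M = M ^ (4 / 3 : ℝ) * D ^ (1 / 3 : ℝ) := by
    rw [Real.mul_rpow hM0 hD0, show (4 / 3 : ℝ) = 1 / 3 + 1 by norm_num,
      Real.rpow_add' hM0 (by norm_num), Real.rpow_one]
    ring
  calc ∫ x in Icc (-a) a, h x ^ 2
      ≤ S * ∫ x in Icc (-a) a, h x :=
        integral_sq_le_mul_integral hint (ae_restrict_of_forall_mem measurableSet_Icc hnn)
          (ae_restrict_of_forall_mem measurableSet_Icc hsup)
    _ = (3 / 2 : ℝ) ^ (2 / 3 : ℝ) * M ^ (4 / 3 : ℝ) * D ^ (1 / 3 : ℝ) + M ^ 2 / (2 * a) := by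
        rw [hM, add_mul, mul_assoc _ _ M, hM43]; ring
    _ ≤ (6 : ℝ) ^ ((2 : ℝ) / 3) * M ^ ((4 : ℝ) / 3) * D ^ ((1 : ℝ) / 3)
          + M ^ 2 / (2 * a) := by
        gcongr
        norm_num

/-- Nash-type inequality: for a nonnegative `h ∈ H¹(-a,a)` with mass `M > 0`,
`∫ h² ≤ 6^(2/3) M^(4/3) (∫ h_x²)^(1/3) + M²/|Ω|`. -/
theorem stmt0 (a M : ℝ) (ha : 0 < a) (h : ℝ → ℝ)
    (hdiff : ∀ x ∈ Set.Icc (-a) a, DifferentiableAt ℝ h x)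
    (hL2 : IntegrableOn (fun x => (h x) ^ 2) (Set.Icc (-a) a))
    (hL2' : IntegrableOn (fun x => (deriv h x) ^ 2) (Set.Icc (-a) a))
    (hnn : ∀ x ∈ Set.Icc (-a) a, 0 ≤ h x)
    (hM : (∫ x in (-a)..a, h x) = M) (hMpos : 0 < M) :
    (∫ x in (-a)..a, (h x) ^ 2)
      ≤ (6 : ℝ) ^ ((2 : ℝ)/3) * M ^ ((4 : ℝ)/3) *
          (∫ x in (-a)..a, (deriv h x) ^ 2) ^ ((1 : ℝ)/3)
        + M ^ 2 / (2 * a) :=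
  stmt0_general a M ha h hdiff hL2' hnn hM
end

section
/- If y : ℝ → ℝ is a strictly positive, 2π-periodic, smooth solution of γ(y''' + y') = β cos(x) − 1/y² + 1/y³ with γ ≥ 0, then β ≤ 8/27. -/
open Real

/-- Nonexistence of positive 2π-periodic smooth solutions of
`γ(y''' + y') = β cos x − 1/y² + 1/y³` when `β > 8/27`:
any such solution forces `β ≤ 8/27`. -/
theorem stmt1 (γ β : ℝ) (hγ : 0 ≤ γ) (hβ : 0 < β) (y : ℝ → ℝ)
    (hsmooth : ContDiff ℝ (⊤ : ℕ∞) y)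
    (hpos : ∀ x, 0 < y x)
    (hper : ∀ x, y (x + 2 * π) = y x)
    (heq : ∀ x, γ * (iteratedDeriv 3 y x + deriv y x)
      = β * Real.cos x - 1 / (y x) ^ 2 + 1 / (y x) ^ 3) :
    β ≤ 8 / 27 := by
  have hπ := Real.pi_pos
  -- regularity of derivatives
  have hs' : ContDiff ℝ (⊤:ℕ∞) y := hsmooth.of_le (by simp)
  have h1 : ContDiff ℝ (⊤:ℕ∞) (deriv y) := (contDiff_infty_iff_deriv.mp hs').2
  have h2 : ContDiff ℝ (⊤:ℕ∞) (deriv (deriv y)) := (contDiff_infty_iff_deriv.mp h1).2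
  have h3c : Continuous (deriv (deriv (deriv y))) :=
    (contDiff_infty_iff_deriv.mp h2).2.continuous
  have hyc : Continuous y := hsmooth.continuous
  have hy1c : Continuous (deriv y) := h1.continuous
  have hiter : iteratedDeriv 3 y = deriv (deriv (deriv y)) := by
    rw [iteratedDeriv_succ, iteratedDeriv_succ, iteratedDeriv_one]
  -- periodicity of derivatives
  have Pd : ∀ f : ℝ → ℝ, (∀ x, f (x + 2 * π) = f x) →
      ∀ x, deriv f (x + 2 * π) = deriv f x := by
    intro f hf x
    have hfe : (fun t => f (t + 2 * π)) = f := funext hf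
    rw [← deriv_comp_add_const f (2 * π) x, hfe]
  have hper1 : ∀ x, deriv y (x + 2 * π) = deriv y x := Pd y hper
  have hper2 : ∀ x, deriv (deriv y) (x + 2 * π) = deriv (deriv y) x :=
    Pd (deriv y) hper1
  -- the key vanishing integral
  have hI : ∫ x in (0:ℝ)..(2 * π),
      (deriv (deriv (deriv y)) x + deriv y x) * (1 + Real.cos x) = 0 := by
    have hF : ∀ x ∈ Set.uIcc (0:ℝ) (2 * π),
        HasDerivAt (fun x => deriv (deriv y) x * (1 + Real.cos x)
            + deriv y x * Real.sin x + y x)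
          ((deriv (deriv (deriv y)) x + deriv y x) * (1 + Real.cos x)) x := by
      intro x _
      have hy : HasDerivAt y (deriv y x) x :=
        ((hs'.differentiable (by simp)) x).hasDerivAt
      have hy1 : HasDerivAt (deriv y) (deriv (deriv y) x) x :=
        ((h1.differentiable (by simp)) x).hasDerivAt
      have hy2 : HasDerivAt (deriv (deriv y)) (deriv (deriv (deriv y)) x) x :=
        ((h2.differentiable (by simp)) x).hasDerivAt
      have hc : HasDerivAt (fun x => 1 + Real.cos x) (-Real.sin x) x := by
        exact (Real.hasDerivAt_cos x).const_add 1
      have hs : HasDerivAt Real.sin (Real.cos x) x := Real.hasDerivAt_sin x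
      have h := ((hy2.mul hc).add (hy1.mul hs)).add hy
      convert h using 1
      all_goals first | rfl | ring
    have hint : IntervalIntegrable
        (fun x => (deriv (deriv (deriv y)) x + deriv y x) * (1 + Real.cos x))
        MeasureTheory.volume 0 (2 * π) :=
      ((h3c.add hy1c).mul (continuous_const.add Real.continuous_cos)).intervalIntegrable _ _
    rw [intervalIntegral.integral_eq_sub_of_hasDerivAt hF hint]
    have e2 : deriv (deriv y) (2 * π) = deriv (deriv y) 0 := by
      simpa using hper2 0
    have e1 : deriv y (2 * π) = deriv y 0 := by simpa using hper1 0
    have e0 : y (2 * π) = y 0 := by simpa using hper 0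
    simp [e0, e1, e2, Real.cos_two_pi, Real.sin_two_pi]
  -- integrability facts
  have hy2c : Continuous fun x => 1 / (y x) ^ 2 :=
    continuous_const.div (hyc.pow 2) fun x => pow_ne_zero 2 (hpos x).ne'
  have hy3c : Continuous fun x => 1 / (y x) ^ 3 :=
    continuous_const.div (hyc.pow 3) fun x => pow_ne_zero 3 (hpos x).ne'
  have hgc : Continuous fun x => (1 / (y x) ^ 2 - 1 / (y x) ^ 3) * (1 + Real.cos x) :=
    (hy2c.sub hy3c).mul (continuous_const.add Real.continuous_cos)
  have hcc : Continuous fun x : ℝ => Real.cos x + Real.cos x ^ 2 :=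
    Real.continuous_cos.add (Real.continuous_cos.pow 2)
  -- the equation multiplied by (1 + cos x), integrated
  have hzero : ∫ x in (0:ℝ)..(2 * π),
      (β * (Real.cos x + Real.cos x ^ 2)
        - (1 / (y x) ^ 2 - 1 / (y x) ^ 3) * (1 + Real.cos x)) = 0 := by
    have hpt : ∀ x, β * (Real.cos x + Real.cos x ^ 2)
        - (1 / (y x) ^ 2 - 1 / (y x) ^ 3) * (1 + Real.cos x)
        = γ * ((deriv (deriv (deriv y)) x + deriv y x) * (1 + Real.cos x)) := by
      intro x
      have h := heq x
      rw [hiter] at h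
      have e : β * (Real.cos x + Real.cos x ^ 2)
          - (1 / (y x) ^ 2 - 1 / (y x) ^ 3) * (1 + Real.cos x)
          = (β * Real.cos x - 1 / (y x) ^ 2 + 1 / (y x) ^ 3) * (1 + Real.cos x) := by
        ring
      rw [e, ← h]
      ring
    simp_rw [hpt]
    rw [intervalIntegral.integral_const_mul, hI, mul_zero]
  have hsplit : β * π = ∫ x in (0:ℝ)..(2 * π),
      (1 / (y x) ^ 2 - 1 / (y x) ^ 3) * (1 + Real.cos x) := by
    have hA : ∫ x in (0:ℝ)..(2 * π), (Real.cos x + Real.cos x ^ 2) = π := by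
      rw [intervalIntegral.integral_add (f := fun x => Real.cos x) (g := fun x => Real.cos x ^ 2)
          (Real.continuous_cos.intervalIntegrable _ _)
          ((Real.continuous_cos.pow 2).intervalIntegrable _ _),
        integral_cos, integral_cos_sq]
      simp [Real.sin_two_pi, Real.cos_two_pi]
    have hi1 : IntervalIntegrable (fun x => β * (Real.cos x + Real.cos x ^ 2))
        MeasureTheory.volume 0 (2 * π) := (continuous_const.mul hcc).intervalIntegrable _ _
    have hi2 : IntervalIntegrable
        (fun x => (1 / (y x) ^ 2 - 1 / (y x) ^ 3) * (1 + Real.cos x))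
        MeasureTheory.volume 0 (2 * π) := hgc.intervalIntegrable _ _
    rw [intervalIntegral.integral_sub hi1 hi2] at hzero
    rw [intervalIntegral.integral_const_mul, hA] at hzero
    linarith [hzero]
  -- pointwise bound and conclusion
  have hbound : ∫ x in (0:ℝ)..(2 * π),
      (1 / (y x) ^ 2 - 1 / (y x) ^ 3) * (1 + Real.cos x)
      ≤ ∫ x in (0:ℝ)..(2 * π), (4 / 27) * (1 + Real.cos x) := by
    apply intervalIntegral.integral_mono_on (by positivity)
      (hgc.intervalIntegrable _ _)
      ((continuous_const.mul (continuous_const.add Real.continuous_cos)).intervalIntegrable _ _)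
    intro x _
    have ht : 0 < y x := hpos x
    have hfac : (0:ℝ) ≤ (2 * y x - 3) ^ 2 * (y x + 3) := by positivity
    have hkey : 1 / (y x) ^ 2 - 1 / (y x) ^ 3 ≤ 4 / 27 := by
      have hd : 4 / 27 - (1 / (y x) ^ 2 - 1 / (y x) ^ 3)
          = ((2 * y x - 3) ^ 2 * (y x + 3)) / (27 * (y x) ^ 3) := by
        field_simp
        ring
      nlinarith [div_nonneg hfac (by positivity : (0:ℝ) ≤ 27 * (y x) ^ 3)]
    have hcos : (0:ℝ) ≤ 1 + Real.cos x := by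
      nlinarith [Real.neg_one_le_cos x]
    exact mul_le_mul_of_nonneg_right hkey hcos
  have hval : ∫ x in (0:ℝ)..(2 * π), (4 / 27 : ℝ) * (1 + Real.cos x) = 8 / 27 * π := by
    rw [intervalIntegral.integral_const_mul,
      intervalIntegral.integral_add (intervalIntegrable_const)
        (Real.continuous_cos.intervalIntegrable _ _),
      integral_cos]
    simp [Real.sin_two_pi]
    ring
  rw [hval] at hbound
  rw [← hsplit] at hbound
  have := (mul_le_mul_iff_left₀ hπ).mp hbound
  linarith
end

section
/- Let y : ℝ → ℝ be strictly positive, 2π-periodic, and smooth, and suppose ∫_{-π}^{π} (1/y² − 1/y³) dx = 0 and ∫_{-π}^{π} (1/y² − 1/y³) cos x dx = πβ. Then πβ ≤ ∫_{y ≥ 1} (4/27)(1 + cos x) dx ≤ 8π/27, hence β ≤ 8/27. -/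
open Real MeasureTheory

lemma key_le (t : ℝ) (ht : 0 < t) : 1 / t ^ 2 - 1 / t ^ 3 ≤ 4 / 27 := by
  rw [div_sub_div _ _ (pow_ne_zero 2 ht.ne') (pow_ne_zero 3 ht.ne'),
    div_le_div_iff₀ (by positivity) (by norm_num)]
  nlinarith [mul_nonneg (mul_nonneg (sq_nonneg t) (sq_nonneg (2 * t - 3))) (by linarith : (0:ℝ) ≤ t + 3), mul_pos ht ht]

lemma key_neg (t : ℝ) (ht : 0 < t) (ht1 : t < 1) : 1 / t ^ 2 - 1 / t ^ 3 ≤ 0 := by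
  rw [sub_nonpos, div_le_div_iff₀ (by positivity) (by positivity)]
  nlinarith [mul_pos ht ht, sq_nonneg t]

/-- If a positive smooth 2π-periodic `y` satisfies the two solvability
conditions, then `πβ ≤ ∫_{y≥1} (4/27)(1+cos x) dx ≤ 8π/27`, hence `β ≤ 8/27`. -/
theorem stmt2 (β : ℝ) (y : ℝ → ℝ)
    (hsmooth : ContDiff ℝ (⊤ : ℕ∞) y)
    (hpos : ∀ x, 0 < y x)
    (hper : ∀ x, y (x + 2 * π) = y x)
    (h1 : (∫ x in (-π)..π, (1 / (y x) ^ 2 - 1 / (y x) ^ 3)) = 0)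
    (h2 : (∫ x in (-π)..π, (1 / (y x) ^ 2 - 1 / (y x) ^ 3) * Real.cos x) = π * β) :
    π * β ≤ (∫ x in (Set.Icc (-π) π ∩ {x | 1 ≤ y x}), (4 / 27) * (1 + Real.cos x)) ∧
    (∫ x in (Set.Icc (-π) π ∩ {x | 1 ≤ y x}), (4 / 27) * (1 + Real.cos x)) ≤ 8 * π / 27 ∧
    β ≤ 8 / 27 := by
  have hcy : Continuous y := hsmooth.continuous
  set f : ℝ → ℝ := fun x => 1 / (y x) ^ 2 - 1 / (y x) ^ 3 with hf
  have hcf : Continuous f := by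
    apply Continuous.sub <;>
    exact continuous_const.div (by continuity) (fun x => pow_ne_zero _ (hpos x).ne')
  set S : Set ℝ := {x | 1 ≤ y x} with hS
  have hSm : MeasurableSet S := (isClosed_le continuous_const hcy).measurableSet
  set g : ℝ → ℝ := fun x => (4 / 27) * (1 + Real.cos x) with hg
  have hcg : Continuous g := by continuity
  have hgnn : ∀ x, 0 ≤ g x := fun x => by
    have := neg_one_le_cos x; simp only [hg]; nlinarith
  -- pointwise bound
  have hpt : ∀ x, f x * (1 + Real.cos x) ≤ S.indicator g x := by
    intro x
    by_cases hx : x ∈ S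
    · rw [Set.indicator_of_mem hx]
      have := key_le (y x) (hpos x)
      have h1c : 0 ≤ 1 + Real.cos x := by nlinarith [neg_one_le_cos x]
      calc f x * (1 + Real.cos x) ≤ (4 / 27) * (1 + Real.cos x) :=
            mul_le_mul_of_nonneg_right this h1c
        _ = g x := rfl
    · rw [Set.indicator_of_notMem hx]
      have hylt : y x < 1 := lt_of_not_ge hx
      have hfneg := key_neg (y x) (hpos x) hylt
      have h1c : 0 ≤ 1 + Real.cos x := by nlinarith [neg_one_le_cos x]
      exact mul_nonpos_of_nonpos_of_nonneg hfneg h1c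
  have hle : -π ≤ π := by linarith [pi_pos]
  -- πβ = ∫_{-π}^{π} f (1+cos)
  have hint1 : IntervalIntegrable f volume (-π) π := hcf.intervalIntegrable _ _
  have hint2 : IntervalIntegrable (fun x => f x * Real.cos x) volume (-π) π :=
    (hcf.mul Real.continuous_cos).intervalIntegrable _ _
  have heq : (∫ x in (-π)..π, f x * (1 + Real.cos x)) = π * β := by
    have : (∫ x in (-π)..π, f x * (1 + Real.cos x))
        = (∫ x in (-π)..π, f x) + ∫ x in (-π)..π, f x * Real.cos x := by
      rw [← intervalIntegral.integral_add hint1 hint2]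
      congr 1; ext x; ring
    rw [this, h1, h2, zero_add]
  -- convert to set integral over Icc
  have hIcc : (∫ x in (-π)..π, f x * (1 + Real.cos x))
      = ∫ x in Set.Icc (-π) π, f x * (1 + Real.cos x) := by
    rw [intervalIntegral.integral_of_le hle, ← integral_Icc_eq_integral_Ioc]
  have hIccm : MeasurableSet (Set.Icc (-π) π) := measurableSet_Icc
  have hi1 : IntegrableOn (fun x => f x * (1 + Real.cos x)) (Set.Icc (-π) π) volume :=
    ((hcf.mul (by continuity)).continuousOn).integrableOn_compact isCompact_Icc
  have hi2 : IntegrableOn (S.indicator g) (Set.Icc (-π) π) volume :=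
    (hcg.continuousOn.integrableOn_compact isCompact_Icc).indicator hSm
  have hmono : (∫ x in Set.Icc (-π) π, f x * (1 + Real.cos x))
      ≤ ∫ x in Set.Icc (-π) π, S.indicator g x :=
    setIntegral_mono_on hi1 hi2 hIccm (fun x _ => hpt x)
  have hind : (∫ x in Set.Icc (-π) π, S.indicator g x)
      = ∫ x in Set.Icc (-π) π ∩ S, g x := by
    rw [setIntegral_indicator hSm]
  have hA : π * β ≤ ∫ x in Set.Icc (-π) π ∩ S, g x := by
    calc π * β = ∫ x in Set.Icc (-π) π, f x * (1 + Real.cos x) := by rw [← heq, hIcc]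
      _ ≤ ∫ x in Set.Icc (-π) π, S.indicator g x := hmono
      _ = _ := hind
  -- second bound
  have hsub : (∫ x in Set.Icc (-π) π ∩ S, g x) ≤ ∫ x in Set.Icc (-π) π, g x := by
    apply setIntegral_mono_set (hcg.continuousOn.integrableOn_compact isCompact_Icc)
    · exact Filter.Eventually.of_forall (fun x => hgnn x)
    · exact HasSubset.Subset.eventuallyLE Set.inter_subset_left
  have hval : (∫ x in Set.Icc (-π) π, g x) = 8 * π / 27 := by
    rw [integral_Icc_eq_integral_Ioc, ← intervalIntegral.integral_of_le hle]
    have : (∫ x in (-π)..π, g x) = (4/27) * ∫ x in (-π)..π, (1 + Real.cos x) := by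
      rw [← intervalIntegral.integral_const_mul]
    rw [this, intervalIntegral.integral_add (intervalIntegrable_const)
      (Real.continuous_cos.intervalIntegrable _ _), intervalIntegral.integral_const,
      integral_cos]
    simp [Real.sin_pi]
    ring
  have hB : (∫ x in Set.Icc (-π) π ∩ S, g x) ≤ 8 * π / 27 := hval ▸ hsub
  refine ⟨hA, hB, ?_⟩
  have : π * β ≤ π * (8 / 27) := by linarith [hA.trans hB]
  exact le_of_mul_le_mul_left (by linarith) pi_pos
end

section
/- Let v : [0,T] → [0,∞) be continuous with v(T') ≤ v(0) + c ∫_0^{T'} max{1, v(t)³} dt for all T' ∈ [0,T], where c > 0. Then for all t ≤ T_loc := (1/(4c)) min{1, v(0)^{−2}}, one has v(t) ≤ √2 · max{1, v(0)}. -/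
open MeasureTheory Set

/-! The majorant `W s = M + c ∫₀ˢ max 1 (v³)`, `M = max 1 (v 0)`, dominates `v` and satisfies
`W' ≤ c W³`; hence `W⁻² + 2cs` is nondecreasing (Bihari's argument for the ODE `y' = c y³`),
which gives `v s ≤ W s ≤ M / √(1 - 2cM²s)`. On the stated interval `2cM²t ≤ 1/2`. -/

theorem inv_sq_sub_le_inv_sq_of_deriv_le_mul_cube {W W' : ℝ → ℝ} {a b c : ℝ}
    (hcont : ContinuousOn W (Icc a b)) (hpos : ∀ s ∈ Icc a b, 0 < W s)
    (hderiv : ∀ s ∈ Ioo a b, HasDerivAt W (W' s) s)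
    (hbound : ∀ s ∈ Ioo a b, W' s ≤ c * W s ^ 3) :
    ∀ s ∈ Icc a b, (W a ^ 2)⁻¹ - 2 * c * (s - a) ≤ (W s ^ 2)⁻¹ := by
  have hmono : MonotoneOn (fun s => (W s ^ 2)⁻¹ + 2 * c * s) (Icc a b) := by
    refine monotoneOn_of_hasDerivWithinAt_nonneg (f' := fun s => 2 * (c - W' s / W s ^ 3))
      (convex_Icc a b) ?_ (fun s hs => ?_) (fun s hs => ?_)
    · exact ((hcont.pow 2).inv₀ fun s hs => (pow_pos (hpos s hs) 2).ne').add (by fun_prop)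
    · rw [interior_Icc] at hs
      have hWs := (hpos s (Ioo_subset_Icc_self hs)).ne'
      refine HasDerivAt.hasDerivWithinAt ?_
      convert (((hderiv s hs).fun_pow 2).fun_inv (pow_ne_zero 2 hWs)).fun_add
        ((hasDerivAt_id' s).const_mul (2 * c)) using 1
      field_simp
      ring
    · rw [interior_Icc] at hs
      have hWs := pow_pos (hpos s (Ioo_subset_Icc_self hs)) 3
      have : W' s / W s ^ 3 ≤ c := (div_le_iff₀ hWs).2 (hbound s hs)
      linarith
  intro s hs
  have := hmono (left_mem_Icc.2 (hs.1.trans hs.2)) hs hs.1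
  simp only at this
  linarith

theorem le_div_sqrt_of_inv_sq_sub_le {w M c s : ℝ} (hw : 0 < w) (hM : 0 < M)
    (h : (M ^ 2)⁻¹ - 2 * c * s ≤ (w ^ 2)⁻¹) (hx : 0 < 1 - 2 * c * M ^ 2 * s) :
    w ≤ M / √(1 - 2 * c * M ^ 2 * s) := by
  have hsq : (w * √(1 - 2 * c * M ^ 2 * s)) ^ 2 ≤ M ^ 2 :=
    calc (w * √(1 - 2 * c * M ^ 2 * s)) ^ 2 = M ^ 2 * (w ^ 2 * ((M ^ 2)⁻¹ - 2 * c * s)) := by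
          rw [mul_pow, Real.sq_sqrt hx.le]; field_simp
      _ ≤ M ^ 2 * (w ^ 2 * (w ^ 2)⁻¹) := by gcongr
      _ = M ^ 2 := by field_simp
  rw [le_div_iff₀ (Real.sqrt_pos.2 hx)]
  exact le_of_sq_le_sq hsq hM.le

theorem le_div_sqrt_of_le_add_integral_max_one_cube {T c M : ℝ} {v : ℝ → ℝ} (hc : 0 ≤ c)
    (hcont : ContinuousOn v (Icc 0 T)) (hM : 1 ≤ M)
    (hineq : ∀ s ∈ Icc 0 T, v s ≤ M + c * ∫ r in (0:ℝ)..s, max 1 (v r ^ 3))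
    {s : ℝ} (hs : s ∈ Icc 0 T) (hsmall : 2 * c * M ^ 2 * s < 1) :
    v s ≤ M / √(1 - 2 * c * M ^ 2 * s) := by
  set g : ℝ → ℝ := fun r => max 1 (v r ^ 3)
  set W : ℝ → ℝ := fun s => M + c * ∫ r in (0:ℝ)..s, g r
  have hT : 0 ≤ T := hs.1.trans hs.2
  have hg : ContinuousOn g (Icc 0 T) := continuousOn_const.sup (hcont.pow 3)
  have hMW : ∀ r ∈ Icc 0 T, M ≤ W r := fun r hr =>
    le_add_of_nonneg_right (mul_nonneg hc (intervalIntegral.integral_nonneg hr.1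
      fun u _ => zero_le_one.trans (le_max_left _ _)))
  have hWcont : ContinuousOn W (Icc 0 T) := by
    have := intervalIntegral.continuousOn_primitive_interval' (μ := volume)
      (hg.intervalIntegrable_of_Icc hT) (left_mem_uIcc (a := 0) (b := T))
    rw [uIcc_of_le hT] at this
    exact continuousOn_const.add (continuousOn_const.mul this)
  have hWderiv : ∀ r ∈ Ioo 0 T, HasDerivAt W (c * g r) r := fun r hr =>
    ((intervalIntegral.integral_hasDerivAt_right
      ((hg.mono (Icc_subset_Icc le_rfl hr.2.le)).intervalIntegrable_of_Icc hr.1.le)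
      ((hg.mono Ioo_subset_Icc_self).stronglyMeasurableAtFilter isOpen_Ioo r hr)
      (hg.continuousAt (Icc_mem_nhds hr.1 hr.2))).const_mul c).const_add M
  have hWbound : ∀ r ∈ Ioo 0 T, c * g r ≤ c * W r ^ 3 := fun r hr => by
    have hW1 : 1 ≤ W r := hM.trans (hMW r (Ioo_subset_Icc_self hr))
    refine mul_le_mul_of_nonneg_left (max_le (one_le_pow₀ hW1) ?_) hc
    exact (Odd.strictMono_pow (by decide)).monotone (hineq r (Ioo_subset_Icc_self hr))
  have hbihari := inv_sq_sub_le_inv_sq_of_deriv_le_mul_cube hWcont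
    (fun r hr => by linarith [hMW r hr]) hWderiv hWbound s hs
  have hW0 : W 0 = M := by simp [W]
  rw [hW0, sub_zero] at hbihari
  calc v s ≤ W s := hineq s hs
    _ ≤ M / √(1 - 2 * c * M ^ 2 * s) :=
      le_div_sqrt_of_inv_sq_sub_le (by linarith [hMW s hs]) (by linarith) hbihari (by linarith)

theorem stmt10_general (T c : ℝ) (hc : 0 < c) (v : ℝ → ℝ)
    (hcont : ContinuousOn v (Set.Icc 0 T))
    (hineq : ∀ T' ∈ Set.Icc 0 T,
      v T' ≤ v 0 + c * ∫ t in (0:ℝ)..T', max 1 ((v t) ^ 3)) :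
    ∀ t ∈ Set.Icc 0 T, t ≤ (1 / (4 * c)) * min 1 ((v 0) ^ 2)⁻¹ →
      v t ≤ Real.sqrt 2 * max 1 (v 0) := by
  intro t ht hloc
  set M := max 1 (v 0)
  have hM : 1 ≤ M := le_max_left _ _
  have hmin : min 1 (v 0 ^ 2)⁻¹ ≤ (M ^ 2)⁻¹ := by
    rcases max_cases 1 (v 0) with ⟨h, -⟩ | ⟨h, -⟩
    · rw [show M = 1 from h]; simp
    · rw [show M = v 0 from h]; exact min_le_right _ _
  have hsmall : 2 * c * M ^ 2 * t ≤ 1 / 2 :=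
    calc 2 * c * M ^ 2 * t ≤ 2 * c * M ^ 2 * (1 / (4 * c) * (M ^ 2)⁻¹) := by
          gcongr; exact hloc.trans (by gcongr)
      _ = 1 / 2 := by field_simp; ring
  have hbound := le_div_sqrt_of_le_add_integral_max_one_cube hc.le hcont hM
    (fun s hs => (hineq s hs).trans (by gcongr; exact le_max_right _ _)) ht (by linarith)
  calc v t ≤ M / √(1 - 2 * c * M ^ 2 * t) := hbound
    _ ≤ M / √(1 / 2) := by gcongr; linarith
    _ = √2 * M := by rw [one_div, Real.sqrt_inv, div_inv_eq_mul, mul_comm]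

/-- Nonlinear Grönwall lemma with cubic nonlinearity: if
`v(T') ≤ v(0) + c∫₀^{T'} max{1, v³}`, then `v(t) ≤ √2 max{1, v(0)}`
for `t ≤ (1/(4c)) min{1, v(0)⁻²}`. -/
theorem stmt10 (T c : ℝ) (hT : 0 < T) (hc : 0 < c) (v : ℝ → ℝ)
    (hcont : ContinuousOn v (Set.Icc 0 T))
    (hnn : ∀ t ∈ Set.Icc 0 T, 0 ≤ v t)
    (hineq : ∀ T' ∈ Set.Icc 0 T,
      v T' ≤ v 0 + c * ∫ t in (0:ℝ)..T', max 1 ((v t) ^ 3)) :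
    ∀ t ∈ Set.Icc 0 T, t ≤ (1 / (4 * c)) * min 1 ((v 0) ^ 2)⁻¹ →
      v t ≤ Real.sqrt 2 * max 1 (v 0) :=
  stmt10_general T c hc v hcont hineq
end

section
/- Let v : [0,T] → [0,∞) be continuous with v(T') ≤ v(0) + d ∫_0^{T'} max{1, v(t)^{4−α/2}} dt for all T' ∈ [0,T], where d > 0 and α ∈ (−1/2,1). Then for all t ≤ T^{(α)} := (1/(d(6−α))) min{1, v(0)^{−(6−α)/2}}, one has v(t) ≤ 4^{1/(6−α)} max{1, v(0)}. -/
/-!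
Set `p = 4 - α/2` and `w = max 1 v`. Since `max 1 (v^p) = w^p`, `w` satisfies the Bihari-type
inequality `w(x) ≤ m + d ∫₀^x w^p` with `m = max 1 (v 0)`. Along the right-hand side `G`, the
function `G^(1-p) + (p-1) d x` is nondecreasing because `G' = d w^p ≤ d G^p`, so
`G(t)^(1-p) ≥ m^(1-p) - (p-1) d t`. The time bound says exactly that `(p-1) d t ≤ m^(1-p)/2`, hence
`G(t) ≤ 2^(1/(p-1)) m`, and `2^(1/(p-1)) = 4^(1/(6-α))`.
-/

open Set MeasureTheory

theorem monotoneOn_rpow_one_sub_add_mul {G G' : ℝ → ℝ} {a b c p : ℝ} (hp : 1 ≤ p)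
    (hG : ContinuousOn G (Icc a b)) (hpos : ∀ x ∈ Icc a b, 0 < G x)
    (hderiv : ∀ x ∈ Ioo a b, HasDerivAt G (G' x) x)
    (hbound : ∀ x ∈ Ioo a b, G' x ≤ c * G x ^ p) :
    MonotoneOn (fun x => G x ^ (1 - p) + (p - 1) * c * x) (Icc a b) := by
  refine monotoneOn_of_hasDerivWithinAt_nonneg (convex_Icc a b)
    (f' := fun x => G' x * (1 - p) * G x ^ (1 - p - 1) + (p - 1) * c * 1)
    ((hG.rpow_const fun x hx => Or.inl (hpos x hx).ne').add (by fun_prop)) (fun x hx => ?_)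
    (fun x hx => ?_)
  · rw [interior_Icc] at hx
    exact (((hderiv x hx).rpow_const (Or.inl (hpos x (Ioo_subset_Icc_self hx)).ne')).add
      ((hasDerivAt_id x).const_mul _)).hasDerivWithinAt
  · rw [interior_Icc] at hx
    have hGx := hpos x (Ioo_subset_Icc_self hx)
    have hquot : G' x * G x ^ (-p) ≤ c :=
      calc G' x * G x ^ (-p) ≤ c * G x ^ p * G x ^ (-p) :=
            mul_le_mul_of_nonneg_right (hbound x hx) (Real.rpow_nonneg hGx.le _)
        _ = c := by rw [mul_assoc, ← Real.rpow_add hGx, add_neg_cancel, Real.rpow_zero, mul_one]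
    rw [show 1 - p - 1 = -p by ring]
    nlinarith [mul_nonneg (sub_nonneg.2 hp) (sub_nonneg.2 hquot)]

theorem rpow_one_sub_sub_le_of_le_add_integral_rpow {w : ℝ → ℝ} {m c p t : ℝ} (hp : 1 ≤ p)
    (hm : 0 < m) (hc : 0 ≤ c) (ht : 0 ≤ t) (hw : ContinuousOn w (Icc 0 t))
    (hw0 : ∀ x ∈ Icc 0 t, 0 ≤ w x)
    (hineq : ∀ x ∈ Icc 0 t, w x ≤ m + c * ∫ s in (0 : ℝ)..x, w s ^ p) :
    m ^ (1 - p) - (p - 1) * c * t ≤ (m + c * ∫ s in (0 : ℝ)..t, w s ^ p) ^ (1 - p) := by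
  set G : ℝ → ℝ := fun x => m + c * ∫ s in (0 : ℝ)..x, w s ^ p with hG
  have hf : ContinuousOn (fun s => w s ^ p) (Icc 0 t) :=
    hw.rpow_const fun _ _ => Or.inr (by linarith)
  have hGpos : ∀ x ∈ Icc 0 t, 0 < G x := fun x hx => by
    have : 0 ≤ ∫ s in (0 : ℝ)..x, w s ^ p := intervalIntegral.integral_nonneg hx.1
      fun s hs => Real.rpow_nonneg (hw0 s ⟨hs.1, hs.2.trans hx.2⟩) _
    positivity
  have hGcont : ContinuousOn G (Icc 0 t) := by
    have := intervalIntegral.continuousOn_primitive_interval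
      (μ := volume) (a := (0 : ℝ)) (b := t) (f := fun s => w s ^ p)
      (by rw [uIcc_of_le ht]; exact hf.integrableOn_Icc)
    rw [uIcc_of_le ht] at this
    exact continuousOn_const.add (continuousOn_const.mul this)
  have hderiv : ∀ x ∈ Ioo 0 t, HasDerivAt G (c * w x ^ p) x := fun x hx =>
    ((intervalIntegral.integral_hasDerivAt_right
      ((hf.mono (Icc_subset_Icc_right hx.2.le)).intervalIntegrable_of_Icc hx.1.le)
      (hf.mono Ioo_subset_Icc_self |>.stronglyMeasurableAtFilter isOpen_Ioo x hx)
      (hf.continuousAt (Icc_mem_nhds hx.1 hx.2))).const_mul c).const_add m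
  have hbound : ∀ x ∈ Ioo 0 t, c * w x ^ p ≤ c * G x ^ p := fun x hx =>
    have hx' := Ioo_subset_Icc_self hx
    mul_le_mul_of_nonneg_left (Real.rpow_le_rpow (hw0 x hx') (hineq x hx') (by linarith)) hc
  have hmono := monotoneOn_rpow_one_sub_add_mul hp hGcont hGpos hderiv hbound
    ⟨le_rfl, ht⟩ ⟨ht, le_rfl⟩ ht
  simp only [hG, intervalIntegral.integral_same, mul_zero, add_zero] at hmono
  linarith

theorem le_two_rpow_mul_of_le_add_integral_rpow {w : ℝ → ℝ} {m c p t : ℝ} (hp : 1 < p)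
    (hm : 0 < m) (hc : 0 ≤ c) (ht : 0 ≤ t) (hw : ContinuousOn w (Icc 0 t))
    (hw0 : ∀ x ∈ Icc 0 t, 0 ≤ w x)
    (hineq : ∀ x ∈ Icc 0 t, w x ≤ m + c * ∫ s in (0 : ℝ)..x, w s ^ p)
    (hsmall : (p - 1) * c * t ≤ m ^ (1 - p) / 2) :
    w t ≤ 2 ^ (p - 1)⁻¹ * m := by
  set G := m + c * ∫ s in (0 : ℝ)..t, w s ^ p
  have hGt : m ^ (1 - p) / 2 ≤ G ^ (1 - p) := by
    linarith [rpow_one_sub_sub_le_of_le_add_integral_rpow hp.le hm hc ht hw hw0 hineq]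
  have hexp : (1 - p)⁻¹ ≤ 0 := inv_nonpos.2 (by linarith)
  calc w t ≤ G := hineq t ⟨ht, le_rfl⟩
    _ = (G ^ (1 - p)) ^ (1 - p)⁻¹ :=
      (Real.rpow_rpow_inv ((hw0 t ⟨ht, le_rfl⟩).trans (hineq t ⟨ht, le_rfl⟩)) (by linarith)).symm
    _ ≤ (m ^ (1 - p) / 2) ^ (1 - p)⁻¹ :=
      Real.rpow_le_rpow_of_nonpos (by positivity) hGt hexp
    _ = 2 ^ (p - 1)⁻¹ * m := by
      rw [Real.div_rpow (by positivity) zero_le_two, Real.rpow_rpow_inv hm.le (by linarith),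
        div_eq_mul_inv, ← Real.rpow_neg zero_le_two, ← inv_neg, neg_sub, mul_comm]

theorem Real.max_one_rpow {a p : ℝ} (ha : 0 ≤ a) (hp : 0 ≤ p) : max 1 a ^ p = max 1 (a ^ p) := by
  rcases le_total a 1 with h | h
  · rw [max_eq_left h, Real.one_rpow, max_eq_left (Real.rpow_le_one ha h hp)]
  · rw [max_eq_right h, max_eq_right (Real.one_le_rpow h hp)]

theorem Real.min_one_rpow_le_max_one_rpow (a q : ℝ) : min 1 (a ^ q) ≤ max 1 a ^ q := by
  rcases max_choice 1 a with h | h <;> rw [h]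
  · rw [Real.one_rpow]
    exact min_le_left _ _
  · exact min_le_right _ _

theorem max_one_le_add_integral_rpow_of_le_add_integral_max_one {v : ℝ → ℝ} {c p t : ℝ}
    (hc : 0 ≤ c) (hp : 0 ≤ p) (hnn : ∀ x ∈ Icc 0 t, 0 ≤ v x)
    (hineq : ∀ x ∈ Icc 0 t, v x ≤ v 0 + c * ∫ s in (0 : ℝ)..x, max 1 (v s ^ p)) :
    ∀ x ∈ Icc 0 t, max 1 (v x) ≤ max 1 (v 0) + c * ∫ s in (0 : ℝ)..x, max 1 (v s) ^ p := by
  intro x hx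
  have hcongr : ∫ s in (0 : ℝ)..x, max 1 (v s) ^ p = ∫ s in (0 : ℝ)..x, max 1 (v s ^ p) :=
    intervalIntegral.integral_congr fun s hs => by
      rw [uIcc_of_le hx.1] at hs
      exact Real.max_one_rpow (hnn s ⟨hs.1, hs.2.trans hx.2⟩) hp
  have hI : 0 ≤ c * ∫ s in (0 : ℝ)..x, max 1 (v s ^ p) := mul_nonneg hc <|
    intervalIntegral.integral_nonneg hx.1 fun s _ => zero_le_one.trans (le_max_left _ _)
  rw [hcongr]
  exact max_le (by linarith [le_max_left 1 (v 0)])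
    ((hineq x hx).trans (by linarith [le_max_right 1 (v 0)]))

theorem stmt11_general (T d α : ℝ) (hd : 0 < d)
    (hα : α ∈ Set.Ioo (-(1:ℝ)/2) 1) (v : ℝ → ℝ)
    (hcont : ContinuousOn v (Set.Icc 0 T))
    (hnn : ∀ t ∈ Set.Icc 0 T, 0 ≤ v t)
    (hineq : ∀ T' ∈ Set.Icc 0 T,
      v T' ≤ v 0 + d * ∫ t in (0:ℝ)..T', max 1 ((v t) ^ (4 - α / 2))) :
    ∀ t ∈ Set.Icc 0 T,
      t ≤ (1 / (d * (6 - α))) * min 1 ((v 0) ^ (-(6 - α) / 2)) →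
      v t ≤ (4 : ℝ) ^ (1 / (6 - α)) * max 1 (v 0) := by
  intro t ht htle
  set p := 4 - α / 2 with hp_def
  set m := max 1 (v 0)
  have h6 : 0 < 6 - α := by linarith [hα.2]
  have hp1 : p - 1 = (6 - α) / 2 := by rw [hp_def]; ring
  have hp : 1 < p := by linarith
  have hsub : Icc 0 t ⊆ Icc 0 T := Icc_subset_Icc_right ht.2
  have hsmall : (p - 1) * d * t ≤ m ^ (1 - p) / 2 :=
    calc (p - 1) * d * t ≤ (p - 1) * d * (1 / (d * (6 - α)) * m ^ (1 - p)) := by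
          refine mul_le_mul_of_nonneg_left (htle.trans (mul_le_mul_of_nonneg_left ?_ (by positivity)))
            (mul_nonneg (by linarith) hd.le)
          rw [show 1 - p = -(6 - α) / 2 by linarith]
          exact Real.min_one_rpow_le_max_one_rpow _ _
      _ = m ^ (1 - p) / 2 := by
        rw [hp1]
        field_simp
  calc v t ≤ max 1 (v t) := le_max_right _ _
    _ ≤ 2 ^ (p - 1)⁻¹ * m :=
      le_two_rpow_mul_of_le_add_integral_rpow (w := fun x => max 1 (v x)) hp (by positivity) hd.le
        ht.1 (continuousOn_const.sup (hcont.mono hsub))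
        (fun x _ => zero_le_one.trans (le_max_left _ _))
        (max_one_le_add_integral_rpow_of_le_add_integral_max_one hd.le (by linarith)
          (fun x hx => hnn x (hsub hx)) (fun x hx => hineq x (hsub hx)))
        hsmall
    _ = 4 ^ (1 / (6 - α)) * m := by
      rw [show (4 : ℝ) = 2 ^ (2 : ℝ) by norm_num, ← Real.rpow_mul zero_le_two, mul_one_div, hp1,
        inv_div]

/-- Nonlinear Grönwall lemma with exponent `4 − α/2`: if
`v(T') ≤ v(0) + d∫₀^{T'} max{1, v^(4−α/2)}`, then
`v(t) ≤ 4^(1/(6−α)) max{1, v(0)}` for `t ≤ (1/(d(6−α))) min{1, v(0)^(−(6−α)/2)}`. -/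
theorem stmt11 (T d α : ℝ) (hT : 0 < T) (hd : 0 < d)
    (hα : α ∈ Set.Ioo (-(1:ℝ)/2) 1) (v : ℝ → ℝ)
    (hcont : ContinuousOn v (Set.Icc 0 T))
    (hnn : ∀ t ∈ Set.Icc 0 T, 0 ≤ v t)
    (hineq : ∀ T' ∈ Set.Icc 0 T,
      v T' ≤ v 0 + d * ∫ t in (0:ℝ)..T', max 1 ((v t) ^ (4 - α / 2))) :
    ∀ t ∈ Set.Icc 0 T,
      t ≤ (1 / (d * (6 - α))) * min 1 ((v 0) ^ (-(6 - α) / 2)) →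
      v t ≤ (4 : ℝ) ^ (1 / (6 - α)) * max 1 (v 0) :=
  stmt11_general T d α hd hα v hcont hnn hineq
end

section
/- With f_ε(z) = z⁴/(z+ε) and G_ε' the natural antiderivative of (z+ε)/z⁴ vanishing at infinity (i.e. G_ε'(z) = −1/(3z³) − ε/(4z⁴) up to sign convention), one has |∫_0^z f_ε(s) G_ε'(s) ds| ≤ z²/2 + 3/5 for all z ≥ 0, provided 0 < ε < (√33 − 3)/4. -/
open MeasureTheory

/-- For `0 < ε < (√33 − 3)/4`:
`|∫₀^z f_ε G_ε'| ≤ z²/2 + 3/5` for all `z ≥ 0`. -/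
theorem stmt13 (ε : ℝ) (hε : 0 < ε) (hε' : ε < (Real.sqrt 33 - 3) / 4)
    (fε Gε' : ℝ → ℝ)
    (hf : ∀ s, fε s = s ^ 4 / (s + ε))
    (hG : ∀ s, Gε' s = -(1 / (3 * s ^ 3)) - ε / (4 * s ^ 4))
    (z : ℝ) (hz : 0 ≤ z) :
    |∫ s in (0:ℝ)..z, fε s * Gε' s| ≤ z ^ 2 / 2 + 3 / 5 := by
  have key : ∀ x ∈ Set.uIoc (0:ℝ) z, ‖fε x * Gε' x‖ ≤ 1/3 := by
    intro x hx
    rw [Set.uIoc_of_le hz] at hx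
    have hx0 : 0 < x := hx.1
    have hxε : 0 < x + ε := by linarith
    rw [hf, hG]
    have heq : x ^ 4 / (x + ε) * (-(1 / (3 * x ^ 3)) - ε / (4 * x ^ 4))
        = -((x/3 + ε/4) / (x + ε)) := by
      field_simp
      ring
    rw [heq, Real.norm_eq_abs, abs_neg, abs_div, abs_of_pos (by linarith : (0:ℝ) < x/3 + ε/4),
      abs_of_pos hxε, div_le_iff₀ hxε]
    linarith
  have h := intervalIntegral.norm_integral_le_of_norm_le_const key
  rw [Real.norm_eq_abs] at h
  have : |z - 0| = z := by rw [sub_zero, abs_of_nonneg hz]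
  rw [this] at h
  nlinarith [sq_nonneg (z - 1/3)]
end
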